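/- arXiv:1901.00651 — 6 statements merged into one kernel-verified Lean document; each statement's English description precedes it below -/
import Mathlib

section
/- The functional $f\colon \mathbb{R}^2 \to \mathbb{R}$ defined by $f(x_1,x_2) = \tfrac{1}{2}(x_1 + x_2 + \sqrt{|x_2 - x_1|})$ is weakly additive with respect to the point $(1,1)$ and is positive (nonnegative on the positive cone), but is not order-preserving: $f(\tfrac12,\tfrac12) < f(\tfrac14,\tfrac12)$ although $(\tfrac14,\tfrac12) \leq (\tfrac12,\tfrac12)$ in the coordinatewise order. -/
/-- `f` is weakly additive with respect to the point `x₀`. -/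
def WeaklyAdditive {L : Type*} [AddCommGroup L] [Module ℝ L] (x₀ : L) (f : L → ℝ) : Prop :=
  ∀ x : L, ∀ l : ℝ, f (x + l • x₀) = f x + l * f x₀

noncomputable def exFun : ℝ × ℝ → ℝ :=
  fun p => (p.1 + p.2 + Real.sqrt |p.2 - p.1|) / 2

theorem stmt5 :
    WeaklyAdditive ((1, 1) : ℝ × ℝ) exFun ∧
      (∀ p : ℝ × ℝ, (0, 0) ≤ p → 0 ≤ exFun p) ∧
      ¬ Monotone exFun ∧
      ((1/4, 1/2) : ℝ × ℝ) ≤ (1/2, 1/2) ∧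
      exFun (1/2, 1/2) < exFun (1/4, 1/2) := by
  have key : exFun (1/2, 1/2) < exFun (1/4, 1/2) := by
    simp only [exFun]
    have h1 : |(1:ℝ)/2 - 1/2| = 0 := by norm_num
    have h2 : |(1:ℝ)/2 - 1/4| = 1/4 := by rw [abs_of_nonneg] <;> norm_num
    rw [h1, h2, Real.sqrt_zero]
    have : Real.sqrt (1/4) = 1/2 := by
      rw [show (1:ℝ)/4 = (1/2)^2 by norm_num, Real.sqrt_sq (by norm_num)]
    rw [this]; norm_num
  have hle : ((1/4, 1/2) : ℝ × ℝ) ≤ (1/2, 1/2) := by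
    constructor <;> norm_num
  refine ⟨?_, ?_, ?_, hle, key⟩
  · intro x l
    simp only [exFun, Prod.smul_mk, Prod.fst_add, Prod.snd_add, smul_eq_mul, mul_one]
    have : x.2 + l - (x.1 + l) = x.2 - x.1 := by ring
    rw [this]
    have h0 : |(1:ℝ) - 1| = 0 := by norm_num
    rw [h0, Real.sqrt_zero]
    ring
  · intro p hp
    have h1 : (0:ℝ) ≤ p.1 := hp.1
    have h2 : (0:ℝ) ≤ p.2 := hp.2
    have := Real.sqrt_nonneg |p.2 - p.1|
    simp only [exFun]
    positivity
  · intro hmono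
    exact absurd (hmono hle) (not_le.mpr key)
end

section
/- Let $L$ be a partially ordered vector space whose positive cone has interior point $x_0$, equipped with the topology generated by the neighbourhoods $\langle z;\delta\rangle$. If a weakly additive, order-preserving functional $f\colon L \to \mathbb{R}$ is continuous at $0$, then $f$ is continuous on all of $L$. -/
def InnerSeg {L : Type*} [AddCommGroup L] [Module ℝ L] (a b x : L) : Prop :=
  x ∈ segment ℝ a b ∧ x ≠ a ∧ x ≠ b

def InnerPoint {L : Type*} [AddCommGroup L] [Module ℝ L] (S : Set L) (x : L) : Prop :=
  x ∈ S ∧ ∀ a b : L, InnerSeg a b x →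
    ∃ c d : L, c ∈ segment ℝ a b ∩ S ∧ d ∈ segment ℝ a b ∩ S ∧ InnerSeg c d x

def coneNbhd {L : Type*} [AddCommGroup L] [PartialOrder L] [Module ℝ L]
    (x₀ z : L) (δ : ℝ) : Set L :=
  {y : L | InnerPoint {v : L | 0 ≤ v} (δ • x₀ + (y - z)) ∧
           InnerPoint {v : L | 0 ≤ v} (δ • x₀ - (y - z))}

def coneTop {L : Type*} [AddCommGroup L] [PartialOrder L] [Module ℝ L]
    (x₀ : L) : TopologicalSpace L :=
  TopologicalSpace.generateFrom {s : Set L | ∃ z : L, ∃ δ : ℝ, 0 < δ ∧ s = coneNbhd x₀ z δ}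

/-
The box `⟨z; δ⟩` is open, contains `z` (as `δ • x₀` is an inner point of the cone), and lies in
the order interval `[z - δ • x₀, z + δ • x₀]`. Monotonicity and weak additivity squeeze `f` on this
interval between `f z ∓ δ * f x₀`, so `|f y - f z| ≤ δ * |f x₀|` near `z`.
-/

section InnerPoint

variable {L M : Type*} [AddCommGroup L] [Module ℝ L] [AddCommGroup M] [Module ℝ M]

lemma LinearMap.apply_mem_segment (f : L →ₗ[ℝ] M) {a b x : L} (h : x ∈ segment ℝ a b) :
    f x ∈ segment ℝ (f a) (f b) := by
  obtain ⟨u, v, hu, hv, huv, rfl⟩ := h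
  exact ⟨u, v, hu, hv, huv, by simp⟩

lemma InnerSeg.map {a b x : L} (f : L →ₗ[ℝ] M) (hf : Function.Injective f) (h : InnerSeg a b x) :
    InnerSeg (f a) (f b) (f x) :=
  ⟨f.apply_mem_segment h.1, fun he => h.2.1 (hf he), fun he => h.2.2 (hf he)⟩

lemma InnerPoint.map {S : Set L} {T : Set M} {x : L} (e : L ≃ₗ[ℝ] M) (hST : Set.MapsTo e S T)
    (h : InnerPoint S x) : InnerPoint T (e x) := by
  refine ⟨hST h.1, fun a b hab => ?_⟩
  have hab' : InnerSeg (e.symm a) (e.symm b) x := by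
    simpa using hab.map e.symm.toLinearMap e.symm.injective
  obtain ⟨c, d, ⟨hc, hcS⟩, ⟨hd, hdS⟩, hcd⟩ := h.2 _ _ hab'
  have hseg : ∀ {y}, y ∈ segment ℝ (e.symm a) (e.symm b) → e y ∈ segment ℝ a b := fun hy => by
    simpa using e.toLinearMap.apply_mem_segment hy
  exact ⟨e c, e d, ⟨hseg hc, hST hcS⟩, ⟨hseg hd, hST hdS⟩, hcd.map e.toLinearMap e.injective⟩

end InnerPoint

section ConeTopology

variable {L : Type*} [AddCommGroup L] [PartialOrder L] [Module ℝ L]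

lemma InnerPoint.smul_nonneg_cone [PosSMulMono ℝ L] {x : L} {δ : ℝ} (hδ : 0 < δ)
    (h : InnerPoint {v : L | 0 ≤ v} x) : InnerPoint {v : L | 0 ≤ v} (δ • x) :=
  h.map (LinearEquiv.smulOfNeZero ℝ L δ hδ.ne') fun _ hv => smul_nonneg hδ.le hv

open Topology in
lemma isOpen_coneNbhd (x₀ z : L) {δ : ℝ} (hδ : 0 < δ) :
    IsOpen[coneTop x₀] (coneNbhd x₀ z δ) :=
  TopologicalSpace.GenerateOpen.basic _ ⟨z, δ, hδ, rfl⟩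

lemma self_mem_coneNbhd [PosSMulMono ℝ L] {x₀ : L} (hx₀ : InnerPoint {v : L | 0 ≤ v} x₀)
    (z : L) {δ : ℝ} (hδ : 0 < δ) : z ∈ coneNbhd x₀ z δ := by
  have := hx₀.smul_nonneg_cone hδ
  simpa [coneNbhd] using And.intro this this

lemma mem_Icc_of_mem_coneNbhd [IsOrderedAddMonoid L] {x₀ z y : L} {δ : ℝ}
    (hy : y ∈ coneNbhd x₀ z δ) : y ∈ Set.Icc (z - δ • x₀) (z + δ • x₀) := by
  obtain ⟨⟨hlow, -⟩, ⟨hupp, -⟩⟩ := hy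
  replace hlow : (0 : L) ≤ δ • x₀ + (y - z) := hlow
  replace hupp : (0 : L) ≤ δ • x₀ - (y - z) := hupp
  constructor
  · rw [← sub_nonneg]
    convert hlow using 1
    abel
  · rw [← sub_nonneg]
    convert hupp using 1
    abel

end ConeTopology

lemma WeaklyAdditive.abs_sub_le_of_mem_Icc {L : Type*} [AddCommGroup L] [Preorder L] [Module ℝ L]
    {x₀ : L} {f : L → ℝ} (hwa : WeaklyAdditive x₀ f) (hmono : Monotone f) {z y : L} {δ : ℝ}
    (hδ : 0 ≤ δ) (hy : y ∈ Set.Icc (z - δ • x₀) (z + δ • x₀)) : |f y - f z| ≤ δ * |f x₀| := by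
  have hlow : f z - δ * f x₀ ≤ f y := by
    have := hwa z (-δ)
    rw [neg_smul, ← sub_eq_add_neg] at this
    linarith [hmono hy.1]
  have hupp : f y ≤ f z + δ * f x₀ := hwa z δ ▸ hmono hy.2
  have hbound : |δ * f x₀| = δ * |f x₀| := by rw [abs_mul, abs_of_nonneg hδ]
  rw [abs_sub_le_iff]
  constructor <;> linarith [le_abs_self (δ * f x₀), neg_abs_le (δ * f x₀)]

theorem stmt6_general {L : Type*} [AddCommGroup L] [PartialOrder L] [IsOrderedAddMonoid L] [Module ℝ L] [PosSMulStrictMono ℝ L]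
    (x₀ : L) (hx₀ : InnerPoint {v : L | 0 ≤ v} x₀)
    (f : L → ℝ) (hwa : WeaklyAdditive x₀ f) (hmono : Monotone f) :
    @Continuous L ℝ (coneTop x₀) _ f := by
  let := coneTop x₀
  refine Metric.continuous_iff'.2 fun z ε hε => ?_
  set δ := ε / (|f x₀| + 1)
  have hδ : 0 < δ := by positivity
  have hδε : δ * |f x₀| < ε := by
    calc δ * |f x₀| < δ * (|f x₀| + 1) := by gcongr; linarith
      _ = ε := div_mul_cancel₀ ε (by positivity)
  filter_upwards [(isOpen_coneNbhd x₀ z hδ).mem_nhds (self_mem_coneNbhd hx₀ z hδ)] with y hy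
  rw [Real.dist_eq]
  exact (hwa.abs_sub_le_of_mem_Icc hmono hδ.le (mem_Icc_of_mem_coneNbhd hy)).trans_lt hδε

theorem stmt6 {L : Type*} [AddCommGroup L] [PartialOrder L] [IsOrderedAddMonoid L] [Module ℝ L] [PosSMulStrictMono ℝ L]
    (x₀ : L) (hx₀ : InnerPoint {v : L | 0 ≤ v} x₀)
    (f : L → ℝ) (hwa : WeaklyAdditive x₀ f) (hmono : Monotone f)
    (hcont0 : @ContinuousAt L ℝ (coneTop x₀) _ f 0) :
    @Continuous L ℝ (coneTop x₀) _ f :=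
  stmt6_general x₀ hx₀ f hwa hmono
end

section
/- (Hahn–Banach for order-preserving functionals) Let $L$ be a partially ordered vector space with distinguished interior point $x_0$ of the positive cone, and let $B$ be an $A$-subspace of $L$ with respect to $x_0$. Then every weakly additive, order-preserving functional $f\colon B \to \mathbb{R}$ extends to a weakly additive, order-preserving functional $f_0\colon L \to \mathbb{R}$ with $f_0|_B = f$. -/
def IsASubspace {L : Type*} [AddCommGroup L] [Module ℝ L] (x₀ : L) (B : Set L) : Prop :=
  (0 : L) ∈ B ∧ ∀ x ∈ B, ∀ l : ℝ, x + l • x₀ ∈ B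

/-!
The extension can be written down: it is the lower envelope `f₀ z = sup {f b | b ∈ B, b ≤ z}`.
An interior point `x₀` of the cone is an order unit, so every `z` lies between two multiples of
`x₀`; these belong to `B`, which makes the supremum finite. Monotonicity of `f` on `B` gives
`f₀ = f` on `B`, and `f₀` is monotone because the sets grow with `z`. Translation by `λ • x₀` is an
order automorphism of `L` mapping `B` onto itself, so the weak additivity of `f` on `B` passes
to `f₀`.
-/

open Set

section Module

variable {L : Type*} [AddCommGroup L] [Module ℝ L]

lemma exists_eq_add_smul_of_mem_segment {a x c : L} (hc : c ∈ segment ℝ (a - x) (a + x)) :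
    ∃ s : ℝ, c = a + s • x := by
  obtain ⟨u, v, -, -, huv, rfl⟩ := hc
  exact ⟨v - u, by linear_combination (norm := module) huv • a⟩

lemma InnerPoint.exists_neg_add_smul_mem {S : Set L} {x₀ x : L} (hx₀ : InnerPoint S x₀)
    (hx : x ≠ 0) : ∃ w : ℝ, w < 0 ∧ x₀ + w • x ∈ S := by
  have hmid : InnerSeg (x₀ - x) (x₀ + x) x₀ :=
    ⟨⟨1 / 2, 1 / 2, by norm_num, by norm_num, by norm_num, by module⟩,
      fun h => hx (by simpa using h.symm), fun h => hx (by simpa using h.symm)⟩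
  obtain ⟨c, d, ⟨hc, hcS⟩, ⟨hd, hdS⟩, ⟨p, q, hp, hq, hpq, hx₀pq⟩, hc₀, hd₀⟩ := hx₀.2 _ _ hmid
  obtain ⟨s, rfl⟩ := exists_eq_add_smul_of_mem_segment hc
  obtain ⟨t, rfl⟩ := exists_eq_add_smul_of_mem_segment hd
  have hs : s ≠ 0 := by rintro rfl; simp at hc₀
  have ht : t ≠ 0 := by rintro rfl; simp at hd₀
  have hpqst : p * s + q * t = 0 := by
    refine (smul_eq_zero.mp ?_).resolve_right hx
    calc (p * s + q * t) • x
        = p • (x₀ + s • x) + q • (x₀ + t • x) - (p + q) • x₀ := by module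
      _ = 0 := by rw [hx₀pq, hpq, one_smul, sub_self]
  -- `x₀` lies strictly between `x₀ + s • x` and `x₀ + t • x`, so `s` and `t` have opposite signs
  rcases hs.lt_or_gt with hs | hs
  · exact ⟨s, hs, hcS⟩
  rcases ht.lt_or_gt with ht | ht
  · exact ⟨t, ht, hdS⟩
  obtain rfl | hp := hp.eq_or_lt
  · nlinarith
  · nlinarith [mul_pos hp hs, mul_nonneg hq ht.le]

lemma IsASubspace.smul_mem {x₀ : L} {B : Set L} (hB : IsASubspace x₀ B) (l : ℝ) : l • x₀ ∈ B := by
  simpa using hB.2 0 hB.1 l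

end Module

lemma InnerPoint.exists_le_smul {L : Type*} [AddCommGroup L] [PartialOrder L]
    [IsOrderedAddMonoid L] [Module ℝ L] [PosSMulMono ℝ L] {x₀ : L}
    (hx₀ : InnerPoint {v : L | 0 ≤ v} x₀) (x : L) : ∃ l : ℝ, x ≤ l • x₀ := by
  rcases eq_or_ne x 0 with rfl | hx
  · exact ⟨0, by simp⟩
  obtain ⟨w, hw, hwx⟩ := hx₀.exists_neg_add_smul_mem hx
  refine ⟨(-w)⁻¹, (le_inv_smul_iff_of_pos (neg_pos.mpr hw)).mpr ?_⟩
  rwa [neg_smul, neg_le_iff_add_nonneg]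

noncomputable def supBelow {L : Type*} [Preorder L] (B : Set L) (f : L → ℝ) (z : L) : ℝ :=
  sSup (f '' (B ∩ Iic z))

section SupBelow

variable {L : Type*} [Preorder L] {B : Set L} {f : L → ℝ}

lemma supBelow_eq_of_mem (hf : MonotoneOn f B) {z : L} (hz : z ∈ B) : supBelow B f z = f z :=
  ((hf.mono inter_subset_left).map_isGreatest ⟨⟨hz, self_mem_Iic⟩, fun _ hb => hb.2⟩).csSup_eq

lemma bddAbove_image_inter_Iic (hf : MonotoneOn f B) {z : L} (hz : ∃ b ∈ B, z ≤ b) :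
    BddAbove (f '' (B ∩ Iic z)) :=
  let ⟨b, hb, hzb⟩ := hz
  hf.map_bddAbove inter_subset_left ⟨b, fun _ hy => hy.2.trans hzb, hb⟩

lemma monotone_supBelow (hf : MonotoneOn f B) (hlow : ∀ z, ∃ b ∈ B, b ≤ z)
    (hup : ∀ z, ∃ b ∈ B, z ≤ b) : Monotone (supBelow B f) := by
  intro z z' hzz'
  obtain ⟨b, hb, hbz⟩ := hlow z
  exact csSup_le_csSup (bddAbove_image_inter_Iic hf (hup z'))
    ⟨f b, b, ⟨hb, hbz⟩, rfl⟩ (image_mono (inter_subset_inter_right _ (Iic_subset_Iic.mpr hzz')))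

end SupBelow

section Translation

variable {L : Type*} [AddCommGroup L] [PartialOrder L] [IsOrderedAddMonoid L] [Module ℝ L]
  {x₀ : L} {B : Set L} {f : L → ℝ}

lemma image_inter_Iic_add_smul (hB : IsASubspace x₀ B)
    (hwa : ∀ x ∈ B, ∀ l : ℝ, f (x + l • x₀) = f x + l * f x₀) (z : L) (l : ℝ) :
    f '' (B ∩ Iic (z + l • x₀)) = (· + l * f x₀) '' (f '' (B ∩ Iic z)) := by
  rw [image_image]
  ext r
  constructor
  · rintro ⟨b, ⟨hb, hbz⟩, rfl⟩
    refine ⟨b + (-l) • x₀, ⟨hB.2 b hb (-l), ?_⟩, ?_⟩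
    · simpa [neg_smul, ← sub_eq_add_neg] using hbz
    · change f (b + (-l) • x₀) + l * f x₀ = f b
      rw [hwa b hb]
      ring
  · rintro ⟨b, ⟨hb, hbz⟩, rfl⟩
    exact ⟨b + l • x₀, ⟨hB.2 b hb l, add_le_add_left hbz _⟩, hwa b hb l⟩

lemma supBelow_add_smul (hB : IsASubspace x₀ B)
    (hwa : ∀ x ∈ B, ∀ l : ℝ, f (x + l • x₀) = f x + l * f x₀)
    (hf : MonotoneOn f B) {z : L} (hlow : ∃ b ∈ B, b ≤ z) (hup : ∃ b ∈ B, z ≤ b) (l : ℝ) :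
    supBelow B f (z + l • x₀) = supBelow B f z + l * f x₀ := by
  obtain ⟨b, hb, hbz⟩ := hlow
  have hne : (f '' (B ∩ Iic z)).Nonempty := ⟨f b, b, ⟨hb, hbz⟩, rfl⟩
  rw [supBelow, image_inter_Iic_add_smul hB hwa]
  exact ((OrderIso.addRight (l * f x₀)).map_csSup' hne (bddAbove_image_inter_Iic hf hup)).symm

end Translation

theorem stmt9 {L : Type*} [AddCommGroup L] [PartialOrder L] [IsOrderedAddMonoid L] [Module ℝ L] [PosSMulStrictMono ℝ L]
    (x₀ : L) (hx₀ : InnerPoint {v : L | 0 ≤ v} x₀)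
    (B : Set L) (hB : IsASubspace x₀ B)
    (f : L → ℝ)
    (hwa : ∀ x ∈ B, ∀ l : ℝ, f (x + l • x₀) = f x + l * f x₀)
    (hmono : ∀ x ∈ B, ∀ y ∈ B, x ≤ y → f x ≤ f y) :
    ∃ f₀ : L → ℝ, WeaklyAdditive x₀ f₀ ∧ Monotone f₀ ∧ ∀ x ∈ B, f₀ x = f x := by
  have hf : MonotoneOn f B := hmono
  have hup : ∀ z, ∃ b ∈ B, z ≤ b := fun z =>
    let ⟨l, hl⟩ := hx₀.exists_le_smul z
    ⟨l • x₀, hB.smul_mem l, hl⟩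
  have hlow : ∀ z, ∃ b ∈ B, b ≤ z := fun z =>
    let ⟨l, hl⟩ := hx₀.exists_le_smul (-z)
    ⟨(-l) • x₀, hB.smul_mem (-l), by rw [neg_smul]; exact neg_le.mp hl⟩
  refine ⟨supBelow B f, fun z l => ?_, monotone_supBelow hf hlow hup,
    fun x hx => supBelow_eq_of_mem hf hx⟩
  have hx₀B : x₀ ∈ B := by simpa using hB.smul_mem 1
  rw [supBelow_add_smul hB hwa hf (hlow z) (hup z), supBelow_eq_of_mem hf hx₀B]
end

section
/- Let $E$ and $F$ be partially ordered vector spaces with order units $1_E$ and $1_F$, equipped with their order-norm topologies. Then every weakly additive, order-preserving operator $T\colon E \to F$ is continuous. -/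
/-- The order norm `‖x‖ = inf {c > 0 : -c•e ≤ x ≤ c•e}` of a space with order unit `e`. -/
noncomputable def ordNorm {L : Type*} [AddCommGroup L] [PartialOrder L] [Module ℝ L]
    (e x : L) : ℝ :=
  sInf {c : ℝ | 0 < c ∧ -(c • e) ≤ x ∧ x ≤ c • e}

/-- `e` is an order unit: every element is bounded by a multiple of `e`. -/
def IsOrderUnit {L : Type*} [AddCommGroup L] [PartialOrder L] [Module ℝ L] (e : L) : Prop :=
  ∀ x : L, ∃ l : ℝ, 0 < l ∧ -(l • e) ≤ x ∧ x ≤ l • e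

/-- The space is Archimedean with respect to the order unit `e`. -/
def IsArch {L : Type*} [AddCommGroup L] [PartialOrder L] [Module ℝ L] (e : L) : Prop :=
  ∀ x : L, (∀ n : ℕ, 0 < n → (n : ℝ) • x ≤ e) → x ≤ 0

/-- An operator `T` is weakly additive with respect to the order unit `e`. -/
def WAddOp {L M : Type*} [AddCommGroup L] [Module ℝ L] [AddCommGroup M] [Module ℝ M]
    (e : L) (T : L → M) : Prop :=
  ∀ x : L, ∀ l : ℝ, T (x + l • e) = T x + l • T e


/-! Monotonicity and weak additivity send the order interval `x + [-δ e, δ e]` into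
`T x + [-δ T e, δ T e]`, and `T e ≤ M e'` for some `M` since `e'` is an order unit, so `T` is
Lipschitz with constant `M` for the order norms. -/

open Set

section OrderUnit

variable {L : Type*} [AddCommGroup L] [PartialOrder L] [Module ℝ L] {e : L}

theorem ordNorm_le_of_mem_Icc {x : L} {c : ℝ} (hc : 0 < c) (hx : x ∈ Icc (-(c • e)) (c • e)) :
    ordNorm e x ≤ c :=
  csInf_le ⟨0, fun _ h ↦ h.1.le⟩ ⟨hc, hx⟩

variable [PosSMulMono ℝ L]

theorem IsOrderUnit.nonneg (he : IsOrderUnit e) : 0 ≤ e := by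
  obtain ⟨l, hl, -, hle⟩ := he 0
  simpa [hl.ne'] using smul_nonneg (inv_nonneg.2 hl.le) hle

variable [IsOrderedAddMonoid L]

theorem IsOrderUnit.mem_Icc_of_ordNorm_lt (he : IsOrderUnit e) {x : L} {δ : ℝ}
    (hx : ordNorm e x < δ) : x ∈ Icc (-(δ • e)) (δ • e) := by
  obtain ⟨c, ⟨-, hcx⟩, hcδ⟩ := (csInf_lt_iff ⟨0, fun _ h ↦ h.1.le⟩ (he x)).1 hx
  have hce : c • e ≤ δ • e := smul_le_smul_of_nonneg_right hcδ.le he.nonneg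
  exact ⟨(neg_le_neg hce).trans hcx.1, hcx.2.trans hce⟩

end OrderUnit

theorem WAddOp.sub_mem_Icc_of_monotone {L M : Type*} [AddCommGroup L] [PartialOrder L]
    [IsOrderedAddMonoid L] [Module ℝ L] [AddCommGroup M] [PartialOrder M] [IsOrderedAddMonoid M]
    [Module ℝ M] {e : L} {T : L → M} (hT : WAddOp e T) (hmono : Monotone T) {x y : L} {δ : ℝ}
    (h : y - x ∈ Icc (-(δ • e)) (δ • e)) : T y - T x ∈ Icc (-(δ • T e)) (δ • T e) := by
  have hlow : T (x + (-δ) • e) ≤ T y := hmono <| by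
    simpa [sub_eq_add_neg] using sub_le_iff_le_add.2 (neg_le_sub_iff_le_add.1 h.1)
  have hup : T y ≤ T (x + δ • e) := hmono <| by
    simpa [add_comm] using sub_le_iff_le_add.1 h.2
  rw [hT, neg_smul, ← sub_eq_add_neg] at hlow
  rw [hT] at hup
  exact ⟨neg_le_sub_iff_le_add.2 (sub_le_iff_le_add.1 hlow), sub_le_iff_le_add'.2 hup⟩

theorem WAddOp.ordNorm_sub_le_of_monotone {E F : Type*}
    [AddCommGroup E] [PartialOrder E] [IsOrderedAddMonoid E] [Module ℝ E] [PosSMulMono ℝ E]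
    [AddCommGroup F] [PartialOrder F] [IsOrderedAddMonoid F] [Module ℝ F] [PosSMulMono ℝ F]
    {eE : E} {eF : F} (huE : IsOrderUnit eE) {T : E → F} (hT : WAddOp eE T) (hmono : Monotone T)
    {M : ℝ} (hM : 0 < M) (hTe : T eE ≤ M • eF) {x y : E} {δ : ℝ} (hδ : 0 < δ)
    (hxy : ordNorm eE (y - x) < δ) : ordNorm eF (T y - T x) ≤ δ * M := by
  obtain ⟨hlow, hup⟩ := hT.sub_mem_Icc_of_monotone hmono (huE.mem_Icc_of_ordNorm_lt hxy)
  have hTe' : δ • T eE ≤ (δ * M) • eF := by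
    rw [mul_smul]
    exact smul_le_smul_of_nonneg_left hTe hδ.le
  exact ordNorm_le_of_mem_Icc (mul_pos hδ hM) ⟨(neg_le_neg hTe').trans hlow, hup.trans hTe'⟩

theorem stmt10_general {E F : Type*}
    [AddCommGroup E] [PartialOrder E] [IsOrderedAddMonoid E] [Module ℝ E] [PosSMulStrictMono ℝ E]
    [AddCommGroup F] [PartialOrder F] [IsOrderedAddMonoid F] [Module ℝ F] [PosSMulStrictMono ℝ F]
    (eE : E) (eF : F) (huE : IsOrderUnit eE)
    (huF : IsOrderUnit eF)
    (T : E → F) (hwa : WAddOp eE T) (hmono : Monotone T) :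
    ∀ x : E, ∀ ε : ℝ, 0 < ε → ∃ δ : ℝ, 0 < δ ∧
      ∀ y : E, ordNorm eE (y - x) < δ → ordNorm eF (T y - T x) < ε := by
  obtain ⟨M, hM, -, hTe⟩ := huF (T eE)
  intro x ε hε
  have hδ : 0 < ε / (2 * M) := by positivity
  refine ⟨ε / (2 * M), hδ, fun y hxy ↦ ?_⟩
  calc ordNorm eF (T y - T x) ≤ ε / (2 * M) * M :=
        hwa.ordNorm_sub_le_of_monotone huE hmono hM hTe hδ hxy
    _ = ε / 2 := by field_simp
    _ < ε := half_lt_self hε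

theorem stmt10 {E F : Type*}
    [AddCommGroup E] [PartialOrder E] [IsOrderedAddMonoid E] [Module ℝ E] [PosSMulStrictMono ℝ E]
    [AddCommGroup F] [PartialOrder F] [IsOrderedAddMonoid F] [Module ℝ F] [PosSMulStrictMono ℝ F]
    (eE : E) (eF : F) (huE : IsOrderUnit eE) (haE : IsArch eE)
    (huF : IsOrderUnit eF) (haF : IsArch eF)
    (T : E → F) (hwa : WAddOp eE T) (hmono : Monotone T) :
    ∀ x : E, ∀ ε : ℝ, 0 < ε → ∃ δ : ℝ, 0 < δ ∧
      ∀ y : E, ordNorm eE (y - x) < δ → ordNorm eF (T y - T x) < ε :=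
  stmt10_general eE eF huE huF T hwa hmono
end

section
/- (Banach–Steinhaus for order-preserving operators) Let $E, F$ be vector spaces with order units and $\mathcal{H}$ a family of weakly additive, order-preserving operators $T\colon E \to F$. Let $A = \{x \in E : \{T(x) : T \in \mathcal{H}\} \text{ is bounded in } F\}$. If $A$ is of the second category in $E$, then $A = E$ and $\mathcal{H}$ is equicontinuous. -/
/-- The ball of radius `δ` around `z` in the order norm. -/
def ordBall {L : Type*} [AddCommGroup L] [PartialOrder L] [Module ℝ L]
    (e z : L) (δ : ℝ) : Set L :=
  {y : L | ordNorm e (y - z) < δ}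

/-- The order topology, generated by the order-norm balls. -/
noncomputable def ordTop {L : Type*} [AddCommGroup L] [PartialOrder L] [Module ℝ L]
    (e : L) : TopologicalSpace L :=
  TopologicalSpace.generateFrom {s : Set L | ∃ z : L, ∃ δ : ℝ, 0 < δ ∧ s = ordBall e z δ}

/-- `A` is of the second category: it is not contained in a countable union
of nowhere dense sets. -/
def SecondCategory {X : Type*} (t : TopologicalSpace X) (A : Set X) : Prop :=
  ¬ ∃ f : ℕ → Set X, (∀ n, @interior X t (@closure X t (f n)) = ∅) ∧ A ⊆ ⋃ n, f n

/-- The space with order unit `e` is complete (Banach) in its order norm: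
every Cauchy sequence converges. -/
def OrdComplete {L : Type*} [AddCommGroup L] [PartialOrder L] [Module ℝ L] (e : L) : Prop :=
  ∀ u : ℕ → L,
    (∀ ε : ℝ, 0 < ε → ∃ N : ℕ, ∀ m ≥ N, ∀ n ≥ N, ordNorm e (u m - u n) < ε) →
    ∃ x : L, ∀ ε : ℝ, 0 < ε → ∃ N : ℕ, ∀ n ≥ N, ordNorm e (u n - x) < ε

open Topology

/-!
On a space with an Archimedean order unit, the order norm is a seminorm, and a weakly additive
order-preserving operator `T` satisfies `‖T x - T y‖ ≤ ‖x - y‖ ‖T e‖`, because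
`x ≤ y + ‖x - y‖ e` and `T (y + c e) = T y + c T e`. Hence each level set
`{x | ∀ T ∈ H, ‖T x‖ ≤ n}` is closed, and `A` is their union. As `A` is of the second category,
one of them contains a ball `B(z, δ)`; comparing `T z` with `T (z + (δ/2) e) = T z + (δ/2) T e`
bounds `‖T e‖` uniformly over `H`, and then `‖T x‖ ≤ ‖x‖ ‖T e‖` gives both conclusions.
-/

section OrderNorm

variable {L : Type*} [AddCommGroup L] [PartialOrder L] [Module ℝ L] {e : L}

lemma ordNorm_nonneg (x : L) : 0 ≤ ordNorm e x :=
  Real.sInf_nonneg fun _ hc => hc.1.le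

lemma IsOrderUnit.nonneg_s13 [PosSMulMono ℝ L] (hu : IsOrderUnit e) : 0 ≤ e := by
  obtain ⟨l, hl, -, h⟩ := hu 0
  have := smul_le_smul_of_nonneg_left h (inv_nonneg.2 hl.le)
  rwa [smul_zero, smul_smul, inv_mul_cancel₀ hl.ne', one_smul] at this

variable [IsOrderedAddMonoid L]

lemma ordNorm_neg (x : L) : ordNorm e (-x) = ordNorm e x := by
  unfold ordNorm
  congr 1
  ext c
  constructor <;> rintro ⟨hc, hlow, hupp⟩ <;>
    exact ⟨hc, by simpa using neg_le_neg hupp, by simpa using neg_le_neg hlow⟩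

lemma ordNorm_sub_comm (x y : L) : ordNorm e (x - y) = ordNorm e (y - x) := by
  rw [← ordNorm_neg, neg_sub]

variable [PosSMulMono ℝ L]

lemma ordNorm_le (hu : IsOrderUnit e) {x : L} {c : ℝ} (hc : 0 ≤ c)
    (hlow : -(c • e) ≤ x) (hupp : x ≤ c • e) : ordNorm e x ≤ c := by
  refine le_of_forall_pos_le_add fun ε hε => csInf_le ⟨0, fun _ hd => hd.1.le⟩ ?_
  have hmono : c • e ≤ (c + ε) • e := smul_le_smul_of_nonneg_right (by linarith) hu.nonneg_s13
  exact ⟨by linarith, (neg_le_neg hmono).trans hlow, hupp.trans hmono⟩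

lemma ordNorm_smul_unit_le (hu : IsOrderUnit e) {c : ℝ} (hc : 0 ≤ c) : ordNorm e (c • e) ≤ c :=
  ordNorm_le hu hc ((neg_nonpos.2 (smul_nonneg hc hu.nonneg_s13)).trans (smul_nonneg hc hu.nonneg_s13))
    le_rfl

-- The infimum defining `ordNorm` is attained: this is where the Archimedean property enters.
lemma self_le_ordNorm_smul (hu : IsOrderUnit e) (ha : IsArch e) (x : L) :
    x ≤ ordNorm e x • e := by
  have hnear : ∀ ε : ℝ, 0 < ε → x - ordNorm e x • e ≤ ε • e := by
    intro ε hε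
    obtain ⟨c, ⟨-, -, hxc⟩, hc⟩ :=
      exists_lt_of_csInf_lt (hu x) (lt_add_of_pos_right (ordNorm e x) hε)
    rw [sub_le_iff_le_add', ← add_smul]
    exact hxc.trans (smul_le_smul_of_nonneg_right hc.le hu.nonneg_s13)
  refine sub_nonpos.1 (ha _ fun n hn => ?_)
  have hn : (0 : ℝ) < n := Nat.cast_pos.2 hn
  calc (n : ℝ) • (x - ordNorm e x • e) ≤ (n : ℝ) • ((n : ℝ)⁻¹ • e) :=
        smul_le_smul_of_nonneg_left (hnear (n : ℝ)⁻¹ (inv_pos.2 hn)) hn.le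
    _ = e := by rw [smul_smul, mul_inv_cancel₀ hn.ne', one_smul]

lemma neg_ordNorm_smul_le_self (hu : IsOrderUnit e) (ha : IsArch e) (x : L) :
    -(ordNorm e x • e) ≤ x := by
  simpa [ordNorm_neg] using neg_le_neg (self_le_ordNorm_smul hu ha (-x))

lemma ordNorm_add_le (hu : IsOrderUnit e) (ha : IsArch e) (x y : L) :
    ordNorm e (x + y) ≤ ordNorm e x + ordNorm e y := by
  refine ordNorm_le hu (add_nonneg (ordNorm_nonneg x) (ordNorm_nonneg y)) ?_ ?_
  · rw [add_smul, neg_add]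
    exact add_le_add (neg_ordNorm_smul_le_self hu ha x) (neg_ordNorm_smul_le_self hu ha y)
  · rw [add_smul]
    exact add_le_add (self_le_ordNorm_smul hu ha x) (self_le_ordNorm_smul hu ha y)

lemma ordNorm_sub_le_add (hu : IsOrderUnit e) (ha : IsArch e) (x y : L) :
    ordNorm e (x - y) ≤ ordNorm e x + ordNorm e y := by
  simpa [sub_eq_add_neg, ordNorm_neg] using ordNorm_add_le hu ha x (-y)

lemma abs_ordNorm_sub_ordNorm_le (hu : IsOrderUnit e) (ha : IsArch e) (x y : L) :
    |ordNorm e x - ordNorm e y| ≤ ordNorm e (x - y) := by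
  refine abs_sub_le_iff.2 ⟨?_, ?_⟩
  · simpa using ordNorm_add_le hu ha (x - y) y
  · simpa [ordNorm_sub_comm x y] using ordNorm_add_le hu ha (y - x) x

lemma ordNorm_smul_le (hu : IsOrderUnit e) (ha : IsArch e) {a : ℝ} (ha₀ : 0 ≤ a) (x : L) :
    ordNorm e (a • x) ≤ a * ordNorm e x := by
  refine ordNorm_le hu (mul_nonneg ha₀ (ordNorm_nonneg x)) ?_ ?_
  · rw [mul_smul, ← smul_neg]
    exact smul_le_smul_of_nonneg_left (neg_ordNorm_smul_le_self hu ha x) ha₀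
  · rw [mul_smul]
    exact smul_le_smul_of_nonneg_left (self_le_ordNorm_smul hu ha x) ha₀

end OrderNorm

section OrderTopology

variable {L : Type*} [AddCommGroup L] [PartialOrder L] [IsOrderedAddMonoid L] [Module ℝ L]
  [PosSMulMono ℝ L] {e : L}

lemma mem_ordBall_self (hu : IsOrderUnit e) (z : L) {δ : ℝ} (hδ : 0 < δ) : z ∈ ordBall e z δ := by
  have : ordNorm e (0 : L) ≤ 0 := ordNorm_le hu le_rfl (by simp) (by simp)
  simpa [ordBall] using this.trans_lt hδ

lemma add_smul_mem_ordBall (hu : IsOrderUnit e) (z : L) {t δ : ℝ} (ht : 0 ≤ t) (htδ : t < δ) :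
    z + t • e ∈ ordBall e z δ := by
  simpa [ordBall] using (ordNorm_smul_unit_le hu ht).trans_lt htδ

lemma exists_ordBall_subset_ordBall (hu : IsOrderUnit e) (ha : IsArch e) {w z : L} {δ : ℝ}
    (hz : z ∈ ordBall e w δ) : ∃ δ' > 0, ordBall e z δ' ⊆ ordBall e w δ := by
  refine ⟨δ - ordNorm e (z - w), sub_pos.2 hz, fun y hy => ?_⟩
  have htri := ordNorm_add_le hu ha (y - z) (z - w)
  rw [sub_add_sub_cancel] at htri
  exact htri.trans_lt (lt_sub_iff_add_lt.1 hy)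

lemma isOpen_ordTop_iff (hu : IsOrderUnit e) (ha : IsArch e) {U : Set L} :
    IsOpen[ordTop e] U ↔ ∀ z ∈ U, ∃ δ > 0, ordBall e z δ ⊆ U := by
  let _ : TopologicalSpace L := ordTop e
  refine ⟨fun hU => ?_, fun h => isOpen_iff_forall_mem_open.2 fun z hz => ?_⟩
  · induction hU with
    | basic s hs =>
      obtain ⟨w, δ, -, rfl⟩ := hs
      exact fun z hz => exists_ordBall_subset_ordBall hu ha hz
    | univ => exact fun _ _ => ⟨1, one_pos, Set.subset_univ _⟩
    | inter s t _ _ ihs iht =>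
      intro z ⟨hzs, hzt⟩
      obtain ⟨δs, hδs, hs⟩ := ihs z hzs
      obtain ⟨δt, hδt, ht⟩ := iht z hzt
      refine ⟨min δs δt, lt_min hδs hδt, fun y (hy : ordNorm e (y - z) < _) => ⟨hs ?_, ht ?_⟩⟩
      exacts [hy.trans_le (min_le_left _ _), hy.trans_le (min_le_right _ _)]
    | sUnion S _ ih =>
      rintro z ⟨s, hsS, hzs⟩
      obtain ⟨δ, hδ, hsub⟩ := ih s hsS z hzs
      exact ⟨δ, hδ, hsub.trans (Set.subset_sUnion_of_mem hsS)⟩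
  · obtain ⟨δ, hδ, hsub⟩ := h z hz
    exact ⟨_, hsub, TopologicalSpace.GenerateOpen.basic _ ⟨z, δ, hδ, rfl⟩,
      mem_ordBall_self hu z hδ⟩

lemma continuous_ordTop_of_abs_sub_le (hu : IsOrderUnit e) (ha : IsArch e) {f : L → ℝ} {K : ℝ}
    (hf : ∀ x y, |f x - f y| ≤ K * ordNorm e (x - y)) : Continuous[ordTop e, _] f := by
  refine continuous_def.2 fun s hs => (isOpen_ordTop_iff hu ha).2 fun z hz => ?_
  obtain ⟨ε, hε, hball⟩ := Metric.isOpen_iff.1 hs (f z) hz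
  refine ⟨ε / (|K| + 1), by positivity, fun y hy => hball ?_⟩
  rw [Metric.mem_ball, Real.dist_eq]
  calc |f y - f z| ≤ K * ordNorm e (y - z) := hf y z
    _ ≤ |K| * (ε / (|K| + 1)) :=
        mul_le_mul (le_abs_self K) (le_of_lt hy) (ordNorm_nonneg _) (abs_nonneg K)
    _ < ε := by
        rw [← mul_div_assoc, div_lt_iff₀ (by positivity)]
        linarith

end OrderTopology

lemma SecondCategory.exists_nonempty_interior {X : Type*} [t : TopologicalSpace X] {A : Set X}
    (hA : SecondCategory t A) {C : ℕ → Set X} (hC : ∀ n, IsClosed (C n))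
    (hAC : A ⊆ ⋃ n, C n) : ∃ n, (interior (C n)).Nonempty := by
  by_contra! h
  exact hA ⟨C, fun n => by rw [(hC n).closure_eq, h n], hAC⟩

namespace WAddOp

variable {E F : Type*} [AddCommGroup E] [Module ℝ E] [AddCommGroup F] [Module ℝ F]
  {eE : E} {T : E → F}

lemma map_zero (hw : WAddOp eE T) : T 0 = 0 := by
  simpa using hw 0 1

variable [PartialOrder F] [IsOrderedAddMonoid F] [PosSMulMono ℝ F] {eF : F}

lemma ordNorm_map_unit_le (hw : WAddOp eE T) (huF : IsOrderUnit eF) (haF : IsArch eF) {z : E}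
    {t M : ℝ} (ht : 0 < t) (hz : ordNorm eF (T z) ≤ M) (hzt : ordNorm eF (T (z + t • eE)) ≤ M) :
    ordNorm eF (T eE) ≤ 2 * M / t := by
  have hdiff : t • T eE = T (z + t • eE) - T z := by rw [hw]; abel
  calc ordNorm eF (T eE) = ordNorm eF (t⁻¹ • (t • T eE)) := by rw [inv_smul_smul₀ ht.ne']
    _ ≤ t⁻¹ * ordNorm eF (t • T eE) := ordNorm_smul_le huF haF (inv_nonneg.2 ht.le) _
    _ ≤ t⁻¹ * (2 * M) := by
        gcongr
        rw [hdiff]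
        linarith [ordNorm_sub_le_add huF haF (T (z + t • eE)) (T z)]
    _ = 2 * M / t := inv_mul_eq_div t (2 * M)

variable [PartialOrder E] [IsOrderedAddMonoid E] [PosSMulMono ℝ E]

lemma map_sub_le (hw : WAddOp eE T) (hm : Monotone T) (huE : IsOrderUnit eE) (haE : IsArch eE)
    (huF : IsOrderUnit eF) (haF : IsArch eF) (x y : E) :
    T x - T y ≤ (ordNorm eE (x - y) * ordNorm eF (T eE)) • eF := by
  have hxy : x ≤ y + ordNorm eE (x - y) • eE :=
    sub_le_iff_le_add'.1 (self_le_ordNorm_smul huE haE (x - y))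
  calc T x - T y ≤ T (y + ordNorm eE (x - y) • eE) - T y := sub_le_sub_right (hm hxy) _
    _ = ordNorm eE (x - y) • T eE := by rw [hw]; abel
    _ ≤ ordNorm eE (x - y) • (ordNorm eF (T eE) • eF) :=
        smul_le_smul_of_nonneg_left (self_le_ordNorm_smul huF haF _) (ordNorm_nonneg _)
    _ = _ := (mul_smul _ _ _).symm

lemma ordNorm_sub_le (hw : WAddOp eE T) (hm : Monotone T) (huE : IsOrderUnit eE)
    (haE : IsArch eE) (huF : IsOrderUnit eF) (haF : IsArch eF) (x y : E) :
    ordNorm eF (T x - T y) ≤ ordNorm eE (x - y) * ordNorm eF (T eE) := by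
  refine ordNorm_le huF (mul_nonneg (ordNorm_nonneg _) (ordNorm_nonneg _)) ?_
    (hw.map_sub_le hm huE haE huF haF x y)
  rw [neg_le, neg_sub, ordNorm_sub_comm]
  exact hw.map_sub_le hm huE haE huF haF y x

lemma ordNorm_le_mul (hw : WAddOp eE T) (hm : Monotone T) (huE : IsOrderUnit eE)
    (haE : IsArch eE) (huF : IsOrderUnit eF) (haF : IsArch eF) (x : E) :
    ordNorm eF (T x) ≤ ordNorm eE x * ordNorm eF (T eE) := by
  simpa [hw.map_zero] using hw.ordNorm_sub_le hm huE haE huF haF x 0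

lemma continuous_ordNorm_map (hw : WAddOp eE T) (hm : Monotone T) (huE : IsOrderUnit eE)
    (haE : IsArch eE) (huF : IsOrderUnit eF) (haF : IsArch eF) :
    Continuous[ordTop eE, _] fun x => ordNorm eF (T x) :=
  continuous_ordTop_of_abs_sub_le huE haE fun x y =>
    (abs_ordNorm_sub_ordNorm_le huF haF _ _).trans
      ((hw.ordNorm_sub_le hm huE haE huF haF x y).trans_eq (mul_comm _ _))

end WAddOp

theorem stmt13 {E F : Type*}
    [AddCommGroup E] [PartialOrder E] [IsOrderedAddMonoid E] [Module ℝ E] [PosSMulStrictMono ℝ E]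
    [AddCommGroup F] [PartialOrder F] [IsOrderedAddMonoid F] [Module ℝ F] [PosSMulStrictMono ℝ F]
    (eE : E) (eF : F) (huE : IsOrderUnit eE) (haE : IsArch eE)
    (huF : IsOrderUnit eF) (haF : IsArch eF)
    (H : Set (E → F)) (hH : ∀ T ∈ H, WAddOp eE T ∧ Monotone T)
    (A : Set E)
    (hA : A = {x : E | ∃ M : ℝ, ∀ T ∈ H, ordNorm eF (T x) ≤ M})
    (hcat : SecondCategory (ordTop eE) A) :
    A = Set.univ ∧
      ∀ ε : ℝ, 0 < ε → ∃ δ : ℝ, 0 < δ ∧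
        ∀ T ∈ H, ∀ x : E, ordNorm eE x < δ → ordNorm eF (T x) < ε := by
  subst hA
  let _ : TopologicalSpace E := ordTop eE
  let C : ℕ → Set E := fun n => ⋂ T ∈ H, {x | ordNorm eF (T x) ≤ n}
  have hC : ∀ n, IsClosed (C n) := fun n => isClosed_biInter fun T hT =>
    isClosed_le (WAddOp.continuous_ordNorm_map (hH T hT).1 (hH T hT).2 huE haE huF haF)
      continuous_const
  have hAC : {x | ∃ M : ℝ, ∀ T ∈ H, ordNorm eF (T x) ≤ M} ⊆ ⋃ n, C n := fun x ⟨M, hM⟩ =>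
    Set.mem_iUnion.2 ⟨⌈M⌉₊, Set.mem_iInter₂.2 fun T hT => (hM T hT).trans (Nat.le_ceil M)⟩
  obtain ⟨n, z, hz⟩ := hcat.exists_nonempty_interior hC hAC
  obtain ⟨δ, hδ, hball⟩ := (isOpen_ordTop_iff huE haE).1 isOpen_interior z hz
  have hbound : ∀ y ∈ ordBall eE z δ, ∀ T ∈ H, ordNorm eF (T y) ≤ n := fun y hy T hT =>
    Set.mem_iInter₂.1 (interior_subset (hball hy)) T hT
  set K : ℝ := 2 * n / (δ / 2)
  have hunit : ∀ T ∈ H, ordNorm eF (T eE) ≤ K := fun T hT =>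
    WAddOp.ordNorm_map_unit_le (hH T hT).1 huF haF (half_pos hδ)
      (hbound z (mem_ordBall_self huE z hδ) T hT)
      (hbound _ (add_smul_mem_ordBall huE z (half_pos hδ).le (half_lt_self hδ)) T hT)
  have hle : ∀ T ∈ H, ∀ x, ordNorm eF (T x) ≤ ordNorm eE x * K := fun T hT x =>
    (WAddOp.ordNorm_le_mul (hH T hT).1 (hH T hT).2 huE haE huF haF x).trans
      (mul_le_mul_of_nonneg_left (hunit T hT) (ordNorm_nonneg x))
  have hK : 0 < K + 1 := by positivity
  refine ⟨Set.eq_univ_of_forall fun x => ⟨_, fun T hT => hle T hT x⟩,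
    fun ε hε => ⟨ε / (K + 1), by positivity, fun T hT x hx => ?_⟩⟩
  calc ordNorm eF (T x) ≤ ordNorm eE x * (K + 1) :=
        (hle T hT x).trans (by nlinarith [ordNorm_nonneg (e := eE) x])
    _ < ε / (K + 1) * (K + 1) := mul_lt_mul_of_pos_right hx hK
    _ = ε := div_mul_cancel₀ ε hK.ne'
end

section
/- (Banach–Alaoglu for order-preserving functionals) Let $E$ be a vector space with an order unit $1_E$. The set $E^O$ of all weakly additive, order-preserving functionals $f\colon E \to \mathbb{R}$ with $f(1_E) = 1$ is compact in the topology of pointwise convergence. Moreover, if $E$ is separable, then $E^O$ is metrizable in this topology. -/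
/-!
A state `f` is squeezed by the order unit: `x - d ≤ c • e` gives `x ≤ d + c • e`, hence
`f x ≤ f d + c` by monotonicity and weak additivity. So states are `1`-Lipschitz for the order
norm, and in particular `|f x| ≤ c` whenever `-(c • e) ≤ x ≤ c • e`. The states therefore form a
pointwise-closed subset of a product of compact intervals, which is compact by Tychonoff. If a
countable set `D` is norm-dense, the Lipschitz bound shows that restriction to `D` is injective;
being a continuous injection of a compact space into the metrizable space `D → ℝ`, it is an
embedding.
-/

section OrderUnit

variable {E : Type*} [AddCommGroup E] [Module ℝ E] {e : E}

lemma WAddOp.map_zero_s19 {f : E → ℝ} (hw : WAddOp e f) : f 0 = 0 := by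
  have h := hw 0 1
  simp only [zero_add, one_smul, smul_eq_mul, one_mul] at h
  linarith

variable [PartialOrder E]

def stateSet (e : E) : Set (E → ℝ) :=
  {f | WAddOp e f ∧ Monotone f ∧ f e = 1}

lemma isClosed_stateSet : IsClosed (stateSet e) := by
  simp only [stateSet, WAddOp, Monotone, Set.ofPred_and, Set.ofPred_forall]
  refine .inter (isClosed_iInter fun x ↦ isClosed_iInter fun l ↦ isClosed_eq ?_ ?_)
    (.inter (isClosed_iInter fun a ↦ isClosed_iInter fun b ↦ isClosed_iInter fun _ ↦
      isClosed_le ?_ ?_) (isClosed_eq ?_ ?_)) <;> fun_prop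

variable [IsOrderedAddMonoid E]

lemma abs_sub_le_of_le_smul_unit {f : E → ℝ} (hf : f ∈ stateSet e) {x d : E} {c : ℝ}
    (hlo : -(c • e) ≤ x - d) (hhi : x - d ≤ c • e) : |f x - f d| ≤ c := by
  obtain ⟨hw, hm, h1⟩ := hf
  have shift (y : E) : f (y + c • e) = f y + c := by rw [hw, h1, smul_eq_mul, mul_one]
  have hx : f x ≤ f d + c := shift d ▸ hm (sub_le_iff_le_add'.mp hhi)
  have hd : f d ≤ f x + c := shift x ▸ hm (neg_le_sub_iff_le_add.mp hlo)
  rw [abs_sub_le_iff]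
  constructor <;> linarith

lemma abs_sub_lt_of_ordNorm_lt (hu : IsOrderUnit e) {f : E → ℝ} (hf : f ∈ stateSet e)
    {x d : E} {ε : ℝ} (h : ordNorm e (x - d) < ε) : |f x - f d| < ε := by
  obtain ⟨c, ⟨-, hlo, hhi⟩, hcε⟩ := exists_lt_of_csInf_lt (hu (x - d)) h
  exact (abs_sub_le_of_le_smul_unit hf hlo hhi).trans_lt hcε

lemma isCompact_stateSet (hu : IsOrderUnit e) : IsCompact (stateSet e) := by
  choose c _ hlo hhi using hu
  refine (isCompact_univ_pi fun x ↦ isCompact_Icc (a := -c x) (b := c x)).of_isClosed_subset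
    isClosed_stateSet fun f hf x _ ↦ abs_le.mp ?_
  simpa [hf.1.map_zero_s19] using abs_sub_le_of_le_smul_unit hf (d := 0) (by simpa using hlo x)
    (by simpa using hhi x)

lemma eq_of_eqOn_of_ordNorm_dense (hu : IsOrderUnit e) {D : Set E}
    (hD : ∀ x : E, ∀ ε : ℝ, 0 < ε → ∃ d ∈ D, ordNorm e (x - d) < ε)
    {f g : E → ℝ} (hf : f ∈ stateSet e) (hg : g ∈ stateSet e) (hfg : D.EqOn f g) : f = g := by
  funext x
  refine eq_of_forall_dist_le fun ε hε ↦ ?_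
  obtain ⟨d, hd, hxd⟩ := hD x (ε / 2) (by positivity)
  have hf' := abs_sub_lt_of_ordNorm_lt hu hf hxd
  have hg' := abs_sub_lt_of_ordNorm_lt hu hg hxd
  rw [hfg hd, abs_sub_lt_iff] at hf'
  rw [abs_sub_lt_iff] at hg'
  rw [Real.dist_eq, abs_le]
  constructor <;> linarith

lemma metrizableSpace_stateSet (hu : IsOrderUnit e) {D : Set E} (hDc : D.Countable)
    (hD : ∀ x : E, ∀ ε : ℝ, 0 < ε → ∃ d ∈ D, ordNorm e (x - d) < ε) :
    TopologicalSpace.MetrizableSpace (stateSet e) := by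
  have : Countable D := hDc.to_subtype
  have : CompactSpace (stateSet e) := isCompact_iff_compactSpace.mp (isCompact_stateSet hu)
  let restrict : stateSet e → D → ℝ := fun f d ↦ f.1 d
  have hcont : Continuous restrict :=
    continuous_pi fun d ↦ (continuous_apply d.1).comp continuous_subtype_val
  have hinj : Function.Injective restrict := fun f g hfg ↦ Subtype.ext <|
    eq_of_eqOn_of_ordNorm_dense hu hD f.2 g.2 fun d hd ↦ congrFun hfg ⟨d, hd⟩
  exact (hcont.isClosedEmbedding hinj).isEmbedding.metrizableSpace

end OrderUnit

theorem stmt19_general {E : Type*}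
    [AddCommGroup E] [PartialOrder E] [IsOrderedAddMonoid E] [Module ℝ E]
    (eE : E) (huE : IsOrderUnit eE) :
    IsCompact {f : E → ℝ | WAddOp eE f ∧ Monotone f ∧ f eE = 1} ∧
      ((∃ D : Set E, D.Countable ∧
          ∀ x : E, ∀ ε : ℝ, 0 < ε → ∃ d ∈ D, ordNorm eE (x - d) < ε) →
        TopologicalSpace.MetrizableSpace
          {f : E → ℝ // WAddOp eE f ∧ Monotone f ∧ f eE = 1}) :=
  ⟨isCompact_stateSet huE, fun ⟨_, hDc, hD⟩ ↦ metrizableSpace_stateSet huE hDc hD⟩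

theorem stmt19 {E : Type*}
    [AddCommGroup E] [PartialOrder E] [IsOrderedAddMonoid E] [Module ℝ E] [PosSMulStrictMono ℝ E]
    (eE : E) (huE : IsOrderUnit eE) (haE : IsArch eE) :
    IsCompact {f : E → ℝ | WAddOp eE f ∧ Monotone f ∧ f eE = 1} ∧
      ((∃ D : Set E, D.Countable ∧
          ∀ x : E, ∀ ε : ℝ, 0 < ε → ∃ d ∈ D, ordNorm eE (x - d) < ε) →
        TopologicalSpace.MetrizableSpace
          {f : E → ℝ // WAddOp eE f ∧ Monotone f ∧ f eE = 1}) :=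
  stmt19_general eE huE
end
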